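/- arXiv:2502.12885 — 12 statements merged into one kernel-verified Lean document; each statement's English description precedes it below -/
import Mathlib

section
/- Let A be a ring with property (SF). Let N be a free A-module and M a submodule of N. Then the following are equivalent: (1) there exist an index type ι, a basis (b_i)_{i∈ι} of N and a subset S ⊆ ι such that M is the span of {b_i : i ∈ S}; (2) the quotient module N/M is a free A-module; (3) there exists an A-linear map τ : N → M such that τ(x) = x for every x ∈ M. -/
universe u v

/-- Property (SF): every submodule of every free `A`-module is a free `A`-module. -/
def HasSF (A : Type u) [Ring A] : Prop :=
  ∀ (M : Type v) [AddCommGroup M] [Module A M], Module.Free A M →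
    ∀ N : Submodule A M, Module.Free A ↥N

/-- `M` is a free factor of `N` (written `M ≤* N`): `M ≤ N` and there is a submodule
`M' ≤ N` with `M ⊓ M' = ⊥` and `M ⊔ M' = N` such that `M'` is a free module. -/
def IsFreeFactor {A : Type*} [Ring A] {P : Type*} [AddCommGroup P] [Module A P]
    (M N : Submodule A P) : Prop :=
  M ≤ N ∧ ∃ M' : Submodule A P, M' ≤ N ∧ M ⊓ M' = ⊥ ∧ M ⊔ M' = N ∧ Module.Free A ↥M'

/-- The extension `M ≤ N` is algebraic: the only submodule `L` with `M ≤ L ≤ N`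
which is a free factor of `N` is `L = N`. -/
def IsAlgExt {A : Type*} [Ring A] {P : Type*} [AddCommGroup P] [Module A P]
    (M N : Submodule A P) : Prop :=
  M ≤ N ∧ ∀ L : Submodule A P, M ≤ L → IsFreeFactor L N → L = N

/-! Both conditions (1) and (2) say that `M` has a complement in `N`, and (3) is the
familiar reformulation of that. A sub-basis spans a submodule complemented by the span of the
remaining basis vectors; conversely, under (SF) both `M` and any complement `C` are free, so
bases of `M` and `C` glue to a basis of `N ≅ M × C`. A free quotient is projective, so
`N → N ⧸ M` splits; conversely `N ⧸ M ≅ C` is free by (SF). -/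

namespace Submodule

variable {R E : Type*} [Ring R] [AddCommGroup E] [Module R E]

theorem isComplemented_iff_exists_proj (p : Submodule R E) :
    IsComplemented p ↔ ∃ f : E →ₗ[R] p, ∀ x : p, f x = x :=
  ⟨fun ⟨q, h⟩ => ⟨_, (isComplEquivProj p ⟨q, h⟩).2⟩,
    fun ⟨_, hf⟩ => ⟨_, LinearMap.isCompl_of_proj hf⟩⟩

theorem isComplemented_of_projective_quotient (p : Submodule R E)
    [Module.Projective R (E ⧸ p)] : IsComplemented p := by
  obtain ⟨s, hs⟩ := p.mkQ.exists_rightInverse_of_surjective p.range_mkQ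
  have hsplit := (LinearMap.exact_subtype_mkQ p).split_tfae'.out 0 1
  obtain ⟨-, f, hf⟩ := hsplit.mp ⟨p.injective_subtype, s, hs⟩
  exact (isComplemented_iff_exists_proj p).mpr ⟨f, LinearMap.congr_fun hf⟩

theorem free_quotient_of_isCompl {p q : Submodule R E} (h : IsCompl p q) [Module.Free R q] :
    Module.Free R (E ⧸ p) :=
  .of_equiv (quotientEquivOfIsCompl p q h).symm

theorem exists_basis_span_image_eq_of_isCompl {E : Type v} [AddCommGroup E] [Module R E]
    {p q : Submodule R E} (h : IsCompl p q) [Module.Free R p] [Module.Free R q] :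
    ∃ (ι : Type v) (b : Module.Basis ι R E) (S : Set ι), p = span R (b '' S) := by
  let bp := Module.Free.chooseBasis R p
  let b := (bp.prod (Module.Free.chooseBasis R q)).map (prodEquivOfIsCompl p q h)
  have hb : b ∘ Sum.inl = p.subtype ∘ bp := by
    ext i; simp [b, Module.Basis.prod_apply, coe_prodEquivOfIsCompl']
  refine ⟨_, b, Set.range Sum.inl, ?_⟩
  rw [← Set.range_comp, hb, Set.range_comp, ← map_span, bp.span_eq, map_top, range_subtype]

end Submodule

theorem Module.Basis.isCompl_span_image_compl {ι R E : Type*} [Ring R] [AddCommGroup E]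
    [Module R E] (b : Module.Basis ι R E) (S : Set ι) :
    IsCompl (Submodule.span R (b '' S)) (Submodule.span R (b '' Sᶜ)) where
  disjoint := by
    refine Submodule.disjoint_def.mpr fun x hS hSc => b.repr.injective ?_
    rw [b.mem_span_image] at hS hSc
    have hsupp := (disjoint_compl_right (a := S)).mono hS hSc
    rwa [disjoint_self, Set.bot_eq_empty, Finset.coe_eq_empty, Finsupp.support_eq_empty,
      ← map_zero b.repr] at hsupp
  codisjoint := by
    rw [codisjoint_iff, ← Submodule.span_union, ← Set.image_union, Set.union_compl_self,
      Set.image_univ, b.span_eq]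

theorem freeFactor_tfae {A : Type u} [Ring A] (hSF : HasSF.{u, v} A)
    (N : Type v) [AddCommGroup N] [Module A N] [Module.Free A N]
    (M : Submodule A N) :
    ((∃ (ι : Type v) (b : Module.Basis ι A N) (S : Set ι), M = Submodule.span A (b '' S)) ↔
      Module.Free A (N ⧸ M)) ∧
    (Module.Free A (N ⧸ M) ↔
      ∃ τ : N →ₗ[A] ↥M, ∀ x : ↥M, τ (x : N) = x) := by
  have hfree (P : Submodule A N) : Module.Free A P := hSF N inferInstance P
  have basis_iff : (∃ (ι : Type v) (b : Module.Basis ι A N) (S : Set ι),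
      M = Submodule.span A (b '' S)) ↔ IsComplemented M :=
    ⟨fun ⟨_, b, S, hM⟩ => hM ▸ ⟨_, b.isCompl_span_image_compl S⟩,
      fun ⟨_, hC⟩ => Submodule.exists_basis_span_image_eq_of_isCompl hC⟩
  have quotient_iff : Module.Free A (N ⧸ M) ↔ IsComplemented M :=
    ⟨fun _ => M.isComplemented_of_projective_quotient,
      fun ⟨_, hC⟩ => Submodule.free_quotient_of_isCompl hC⟩
  exact ⟨basis_iff.trans quotient_iff.symm,
    quotient_iff.trans M.isComplemented_iff_exists_proj⟩
end

section
/- Let A be a ring with property (SF), let P be a free A-module, and let L, M, N be submodules of P with M ≤ N. If M is a free factor of N, then M ∩ L is a free factor of N ∩ L. -/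
universe u v

theorem inf_freeFactor_inf {A : Type u} [Ring A] (hSF : HasSF.{u, v} A)
    (P : Type v) [AddCommGroup P] [Module A P] [Module.Free A P]
    (L M N : Submodule A P) (hMN : M ≤ N)
    (h : IsFreeFactor M N) : IsFreeFactor (M ⊓ L) (N ⊓ L) := by
  obtain ⟨-, M', hM'N, hMM', hsupN, hM'free⟩ := h
  -- the canonical map from `N ⊓ L` to `P ⧸ M`
  set φ : ↥(N ⊓ L) →ₗ[A] P ⧸ M := M.mkQ.comp (N ⊓ L).subtype with hφ
  -- kernel of φ is (M ⊓ L) viewed inside N ⊓ L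
  have hker : LinearMap.ker φ = Submodule.comap (N ⊓ L).subtype (M ⊓ L) := by
    ext x
    simp only [hφ, LinearMap.mem_ker, LinearMap.comp_apply, Submodule.mem_comap,
      Submodule.subtype_apply, Submodule.mkQ_apply, Submodule.Quotient.mk_eq_zero,
      Submodule.mem_inf]
    exact ⟨fun hx => ⟨hx, x.2.2⟩, fun hx => hx.1⟩
  -- the image of M' in P ⧸ M is free
  set f : ↥M' →ₗ[A] P ⧸ M := M.mkQ.comp M'.subtype with hf
  have hfinj : Function.Injective f := by
    rw [← LinearMap.ker_eq_bot]
    ext x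
    simp only [hf, LinearMap.mem_ker, LinearMap.comp_apply, Submodule.subtype_apply,
      Submodule.mkQ_apply, Submodule.Quotient.mk_eq_zero, Submodule.mem_bot]
    constructor
    · intro hx
      have : (x : P) ∈ M ⊓ M' := ⟨hx, x.2⟩
      rw [hMM'] at this
      exact Subtype.ext this
    · rintro rfl; simp
  have hfrange : LinearMap.range f = Submodule.map M.mkQ M' := by
    rw [hf, LinearMap.range_comp, Submodule.range_subtype]
  have hQ'free : Module.Free A ↥(Submodule.map M.mkQ M') := by
    rw [← hfrange]
    exact Module.Free.of_equiv (LinearEquiv.ofInjective f hfinj)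
  -- range of φ lies inside the image of M'
  have hle : LinearMap.range φ ≤ Submodule.map M.mkQ M' := by
    rintro - ⟨x, rfl⟩
    have hxN : (x : P) ∈ M ⊔ M' := hsupN ▸ x.2.1
    obtain ⟨m, hm, m', hm', hmm'⟩ := Submodule.mem_sup.mp hxN
    refine ⟨m', hm', ?_⟩
    simp only [hφ, LinearMap.comp_apply, Submodule.subtype_apply, Submodule.mkQ_apply]
    rw [← hmm']
    rw [Submodule.Quotient.mk_add, (Submodule.Quotient.mk_eq_zero M).mpr hm, zero_add]
  -- hence the range of φ is free, by (SF)
  have hrangefree : Module.Free A ↥(LinearMap.range φ) := by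
    have := hSF ↥(Submodule.map M.mkQ M') hQ'free
      (Submodule.comap (Submodule.map M.mkQ M').subtype (LinearMap.range φ))
    exact Module.Free.of_equiv (Submodule.comapSubtypeEquivOfLe hle)
  -- split off a section of φ
  have hproj : Module.Projective A ↥(LinearMap.range φ) := inferInstance
  obtain ⟨s, hs⟩ := Module.projective_lifting_property φ.rangeRestrict
    (LinearMap.id : ↥(LinearMap.range φ) →ₗ[A] ↥(LinearMap.range φ))
    φ.surjective_rangeRestrict
  have hsid : ∀ y : ↥(LinearMap.range φ), φ.rangeRestrict (s y) = y := fun y =>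
    congrFun (congrArg (fun g => g.toFun) hs) y
  set K : Submodule A ↥(N ⊓ L) := LinearMap.range s with hK
  have hsinj : Function.Injective s := by
    intro a b hab
    have := hsid a; rw [hab, hsid b] at this; exact this.symm
  -- K is a complement of ker φ
  have hinfbot : LinearMap.ker φ ⊓ K = ⊥ := by
    rw [eq_bot_iff]
    rintro x ⟨hx1, y, rfl⟩
    have h1 : φ.rangeRestrict (s y) = 0 := by
      apply Subtype.ext
      simpa using hx1
    rw [hsid y] at h1
    rw [h1]
    simp
  have hsuptop : LinearMap.ker φ ⊔ K = ⊤ := by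
    rw [eq_top_iff]
    rintro x -
    rw [(sub_add_cancel x (s (φ.rangeRestrict x))).symm]
    refine Submodule.add_mem_sup ?_ ⟨_, rfl⟩
    rw [LinearMap.mem_ker, map_sub]
    have : φ (s (φ.rangeRestrict x)) = φ x := congrArg Subtype.val (hsid (φ.rangeRestrict x))
    rw [this, sub_self]
  -- transfer everything back to P
  refine ⟨inf_le_inf_right L hMN, Submodule.map (N ⊓ L).subtype K, ?_, ?_, ?_, ?_⟩
  · exact Submodule.map_subtype_le _ _
  · have hML : M ⊓ L = Submodule.map (N ⊓ L).subtype (LinearMap.ker φ) := by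
      rw [hker, Submodule.map_comap_subtype, inf_eq_right.mpr (inf_le_inf_right L hMN)]
    rw [hML, ← Submodule.map_inf _ (N ⊓ L).injective_subtype, hinfbot, Submodule.map_bot]
  · have hML : M ⊓ L = Submodule.map (N ⊓ L).subtype (LinearMap.ker φ) := by
      rw [hker, Submodule.map_comap_subtype, inf_eq_right.mpr (inf_le_inf_right L hMN)]
    rw [hML, ← Submodule.map_sup, hsuptop, Submodule.map_top, Submodule.range_subtype]
  · have e1 : ↥K ≃ₗ[A] ↥(Submodule.map (N ⊓ L).subtype K) :=
      Submodule.equivMapOfInjective _ (N ⊓ L).injective_subtype K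
    have e2 : ↥(LinearMap.range φ) ≃ₗ[A] ↥K := LinearEquiv.ofInjective s hsinj
    exact Module.Free.of_equiv (e2.trans e1)
end

section
/- Let A be a ring with property (SF), let N be a free A-module, and let M_1, …, M_n be finitely many submodules of N, each of which is a free factor of N. Then the intersection M_1 ∩ … ∩ M_n is a free factor of N. -/
universe u v

/-!
Over a ring with (SF) a submodule of a free module `N` is a free factor of `N` exactly when it
has a complement, so it suffices to intersect two complemented submodules `M₁`, `M₂`.
Writing `N = M₁ ⊕ C₁`, the intersection `M₁ ⊓ M₂` is the kernel of `M₂ → N ⧸ M₁`, whose image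
is a submodule of the free module `N ⧸ M₁ ≃ C₁`, hence free and so projective. The kernel is
therefore a direct summand of `M₂`, and, `M₂` being a direct summand of `N`, of `N`.
-/

namespace LinearMap

variable {R M P : Type*} [Ring R] [AddCommGroup M] [Module R M] [AddCommGroup P] [Module R P]

theorem isComplemented_ker_of_projective_range (f : M →ₗ[R] P)
    [Module.Projective R (range f)] : IsComplemented (ker f) := by
  obtain ⟨s, hs⟩ := f.rangeRestrict.exists_rightInverse_of_surjective f.range_rangeRestrict
  have hidem : IsIdempotentElem (s ∘ₗ f.rangeRestrict) := by
    change s ∘ₗ (f.rangeRestrict ∘ₗ s) ∘ₗ f.rangeRestrict = s ∘ₗ f.rangeRestrict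
    rw [hs, id_comp]
  have hker : ker (s ∘ₗ f.rangeRestrict) = ker f := by
    rw [ker_comp_of_ker_eq_bot _ (ker_eq_bot_of_inverse hs), ker_rangeRestrict]
  exact ⟨_, hker ▸ (IsIdempotentElem.isCompl hidem).symm⟩

end LinearMap

namespace Submodule

variable {R M : Type*} [Ring R] [AddCommGroup M] [Module R M]

theorem isComplemented_inf_of_forall_projective {p q : Submodule R M}
    (hp : ∀ P : Submodule R (M ⧸ p), Module.Projective R P) (hq : IsComplemented q) :
    IsComplemented (p ⊓ q) := by
  set f := p.mkQ ∘ₗ q.subtype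
  have hker : (LinearMap.ker f).map q.subtype = p ⊓ q := by
    rw [LinearMap.ker_comp, ker_mkQ, map_comap_subtype, inf_comm]
  obtain ⟨D, hD⟩ := f.isComplemented_ker_of_projective_range
  obtain ⟨C, hC⟩ := hq
  have hsup : p ⊓ q ⊔ D.map q.subtype = q := by
    rw [← hker, ← map_sup, hD.sup_eq_top, map_top, range_subtype]
  refine ⟨D.map q.subtype ⊔ C, Disjoint.isCompl_sup_right_of_isCompl_sup_left ?_ ?_⟩
  · rw [← hker]
    exact disjoint_map q.injective_subtype hD.disjoint
  · rwa [hsup]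

end Submodule

namespace HasSF

variable {A : Type u} [Ring A] {N : Type v} [AddCommGroup N] [Module A N] [Module.Free A N]

theorem isFreeFactor_top_iff (hSF : HasSF.{u, v} A) {K : Submodule A N} :
    IsFreeFactor K ⊤ ↔ IsComplemented K := by
  constructor
  · rintro ⟨-, C, -, hinf, hsup, -⟩
    exact ⟨C, disjoint_iff.mpr hinf, codisjoint_iff.mpr hsup⟩
  · rintro ⟨C, hC⟩
    exact ⟨le_top, C, le_top, hC.inf_eq_bot, hC.sup_eq_top, hSF N inferInstance C⟩

theorem isComplemented_inf (hSF : HasSF.{u, v} A) {M₁ M₂ : Submodule A N}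
    (h₁ : IsComplemented M₁) (h₂ : IsComplemented M₂) : IsComplemented (M₁ ⊓ M₂) := by
  obtain ⟨C₁, hC₁⟩ := h₁
  have : Module.Free A C₁ := hSF N inferInstance C₁
  have : Module.Free A (N ⧸ M₁) := .of_equiv (M₁.quotientEquivOfIsCompl C₁ hC₁).symm
  exact Submodule.isComplemented_inf_of_forall_projective
    (fun P ↦ have := hSF (N ⧸ M₁) inferInstance P; inferInstance) h₂

end HasSF

theorem iInf_freeFactor {A : Type u} [Ring A] (hSF : HasSF.{u, v} A)
    (N : Type v) [AddCommGroup N] [Module A N] [Module.Free A N]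
    (n : ℕ) (M : Fin n → Submodule A N)
    (h : ∀ i, IsFreeFactor (M i) ⊤) :
    IsFreeFactor (⨅ i, M i) ⊤ := by
  rw [hSF.isFreeFactor_top_iff, ← Finset.inf_univ_eq_iInf]
  exact Finset.inf_induction isComplemented_top (fun _ h₁ _ h₂ ↦ hSF.isComplemented_inf h₁ h₂)
    fun i _ ↦ hSF.isFreeFactor_top_iff.mp (h i)
end

section
/- Let A be a ring with property (SF), let P be a free A-module, and let L, M, N be submodules of P with L ≤ M and L ≤ N. If both extensions L ≤ M and L ≤ N are algebraic, then the extension L ≤ M + N is algebraic. -/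
universe u v

/-!
Let `K ⊔ K' = M ⊔ N` with `K ⊓ K' = ⊥`, `K'` free and `L ≤ K`. The image of `M` in `P ⧸ K`
lies in the image of `K'`, which is isomorphic to `K'`; by (SF) it is free. Hence the
surjection of `M` onto it splits, and its kernel `M ⊓ K` is a free factor of `M`. Since
`L ≤ M ⊓ K` and `L ≤ M` is algebraic, `M ⊓ K = M`, i.e. `M ≤ K`. Likewise `N ≤ K`, so
`K = M ⊔ N`.
-/

open Submodule LinearMap

section

variable {A : Type*} [Ring A] {M N : Type*} [AddCommGroup M] [Module A M]
  [AddCommGroup N] [Module A N]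

theorem LinearMap.isCompl_ker_range_of_comp_eq_id {f : M →ₗ[A] N} {s : N →ₗ[A] M}
    (h : f ∘ₗ s = LinearMap.id) : IsCompl (ker f) (range s) := by
  have hfs : Function.LeftInverse f s := fun y => congr($h y)
  have hidem : IsIdempotentElem (s ∘ₗ f) := by
    rw [IsIdempotentElem, Module.End.mul_eq_comp, comp_assoc, ← comp_assoc f, h, id_comp]
  have hrange : range (s ∘ₗ f) = range s :=
    range_comp_of_range_eq_top s (range_eq_top_of_surjective f hfs.surjective)
  have hker : ker (s ∘ₗ f) = ker f :=
    ker_comp_of_ker_eq_bot f (ker_eq_bot_of_injective hfs.injective)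
  exact hrange ▸ hker ▸ hidem.isCompl.symm

theorem LinearMap.exists_isCompl_ker_of_surjective [Module.Projective A N] {f : M →ₗ[A] N}
    (hf : Function.Surjective f) :
    ∃ C : Submodule A M, IsCompl (ker f) C ∧ Nonempty (C ≃ₗ[A] N) := by
  obtain ⟨s, hs⟩ := f.exists_rightInverse_of_surjective (range_eq_top_of_surjective f hf)
  have hfs : Function.LeftInverse f s := fun y => congr($hs y)
  exact ⟨range s, isCompl_ker_range_of_comp_eq_id hs,
    ⟨(LinearEquiv.ofInjective s hfs.injective).symm⟩⟩

end

section

variable {A : Type*} [Ring A] {P : Type*} [AddCommGroup P] [Module A P]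

theorem isFreeFactor_map_subtype {M : Submodule A P} {C D : Submodule A M} (h : IsCompl C D)
    [Module.Free A D] : IsFreeFactor (C.map M.subtype) M := by
  refine ⟨map_subtype_le _ _, D.map M.subtype, map_subtype_le _ _, ?_, ?_, ?_⟩
  · rw [← map_inf _ M.injective_subtype, h.inf_eq_bot, Submodule.map_bot]
  · rw [← Submodule.map_sup, h.sup_eq_top, Submodule.map_top, range_subtype]
  · exact .of_equiv (D.equivMapOfInjective _ M.injective_subtype)

theorem isFreeFactor_inf_ker {Q : Type*} [AddCommGroup Q] [Module A Q] (M : Submodule A P)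
    (f : P →ₗ[A] Q) [Module.Free A (M.map f)] : IsFreeFactor (M ⊓ ker f) M := by
  have : Module.Free A (range (f.domRestrict M)) := by rwa [range_domRestrict]
  obtain ⟨C, hC, ⟨e⟩⟩ :=
    (f.domRestrict M).rangeRestrict.exists_isCompl_ker_of_surjective (surjective_rangeRestrict _)
  have : Module.Free A C := .of_equiv e.symm
  rw [ker_rangeRestrict, ker_domRestrict] at hC
  simpa [map_comap_subtype] using isFreeFactor_map_subtype hC

end

theorem HasSF.free_map_of_le_ker_sup {A : Type u} [Ring A] (hSF : HasSF.{u, v} A)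
    {P Q : Type v} [AddCommGroup P] [Module A P] [AddCommGroup Q] [Module A Q]
    (f : P →ₗ[A] Q) {K' M : Submodule A P} (hK' : Disjoint K' (ker f)) [Module.Free A K']
    (hM : M ≤ ker f ⊔ K') : Module.Free A (M.map f) := by
  have hinj : Function.Injective (f.domRestrict K') := by
    rwa [← ker_eq_bot, ker_domRestrict, ← disjoint_iff_comap_eq_bot]
  have : Module.Free A (K'.map f) := range_domRestrict K' f ▸ .of_equiv (.ofInjective _ hinj)
  have hle : M.map f ≤ K'.map f := by
    rwa [Submodule.map_le_iff_le_comap, comap_map_eq, sup_comm]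
  have := hSF _ this (comap (K'.map f).subtype (M.map f))
  exact .of_equiv (comapSubtypeEquivOfLe hle)

theorem IsFreeFactor.inf_of_le {A : Type u} [Ring A] (hSF : HasSF.{u, v} A)
    {P : Type v} [AddCommGroup P] [Module A P] {K M N : Submodule A P}
    (hK : IsFreeFactor K N) (hMN : M ≤ N) : IsFreeFactor (M ⊓ K) M := by
  obtain ⟨-, K', -, hdisj, hsup, hK'⟩ := hK
  have : Module.Free A (M.map K.mkQ) := hSF.free_map_of_le_ker_sup K.mkQ
    (by rwa [ker_mkQ, disjoint_comm, disjoint_iff]) (by rwa [ker_mkQ, hsup])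
  simpa using isFreeFactor_inf_ker M K.mkQ

theorem IsAlgExt.le_of_isFreeFactor {A : Type u} [Ring A] (hSF : HasSF.{u, v} A)
    {P : Type v} [AddCommGroup P] [Module A P] {L M K N : Submodule A P}
    (hM : IsAlgExt L M) (hK : IsFreeFactor K N) (hMN : M ≤ N) (hLK : L ≤ K) : M ≤ K := by
  rw [← hM.2 (M ⊓ K) (le_inf hM.1 hLK) (hK.inf_of_le hSF hMN)]
  exact inf_le_right

theorem isAlgExt_sup_general {A : Type u} [Ring A] (hSF : HasSF.{u, v} A)
    (P : Type v) [AddCommGroup P] [Module A P]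
    (L M N : Submodule A P)
    (hM : IsAlgExt L M) (hN : IsAlgExt L N) :
    IsAlgExt L (M ⊔ N) := by
  refine ⟨hM.1.trans le_sup_left, fun K hLK hK => le_antisymm hK.1 (sup_le ?_ ?_)⟩
  · exact hM.le_of_isFreeFactor hSF hK le_sup_left hLK
  · exact hN.le_of_isFreeFactor hSF hK le_sup_right hLK

theorem isAlgExt_sup {A : Type u} [Ring A] (hSF : HasSF.{u, v} A)
    (P : Type v) [AddCommGroup P] [Module A P] [Module.Free A P]
    (L M N : Submodule A P) (hLM : L ≤ M) (hLN : L ≤ N)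
    (hM : IsAlgExt L M) (hN : IsAlgExt L N) :
    IsAlgExt L (M ⊔ N) :=
  isAlgExt_sup_general hSF P L M N hM hN
end

section
/- Let A be a ring with property (SF) which satisfies the strong rank condition. Let N be a free A-module and M ≤ N a submodule such that at least one of M or N is finitely generated. Then there exists a unique submodule L of N such that the extension M ≤ L is algebraic and L is a free factor of N. -/
/-!
Among the free factors of `N` containing `M` choose one, `L`, of minimal rank; the finiteness
hypothesis makes this rank finite. A free factor `L₁` of `L` containing `M` is a free factor of
`N`, so `rank L₁ ≥ rank L`; as `L = L₁ ⊕ D` with `D` free and the ranks finite, `D = 0`. Hence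
`M ≤ L` is algebraic.

Conversely, let `L' ≤* N` contain `M`. Projecting `L` onto a free complement of `L'` along `L'`
has free image by (SF), so the projection splits and its kernel `L ⊓ L'` is a free factor of `L`.
If `M ≤ L` is algebraic this forces `L ≤ L'`, and two algebraic closures are thus equal.
-/

universe u v

namespace Submodule

variable {A : Type*} [Ring A] {P : Type*} [AddCommGroup P] [Module A P]

noncomputable def prodEquivSupOfDisjoint {p q : Submodule A P} (h : Disjoint p q) :
    (p × q) ≃ₗ[A] ↥(p ⊔ q) :=
  (LinearEquiv.ofInjective (p.subtype.coprod q.subtype) (by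
    rw [← LinearMap.ker_eq_bot, LinearMap.ker_coprod_of_disjoint_range _ _ (by simpa using h)]
    simp)).trans
    (LinearEquiv.ofEq _ _ (by rw [LinearMap.range_coprod, range_subtype, range_subtype]))

theorem free_sup_of_disjoint {p q : Submodule A P} [Module.Free A p] [Module.Free A q]
    (h : Disjoint p q) : Module.Free A ↥(p ⊔ q) :=
  .of_equiv (prodEquivSupOfDisjoint h)

theorem rank_sup_of_disjoint [StrongRankCondition A] {p q : Submodule A P} [Module.Free A p]
    [Module.Free A q] (h : Disjoint p q) :
    Module.rank A ↥(p ⊔ q) = Module.rank A p + Module.rank A q := by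
  rw [← (prodEquivSupOfDisjoint h).rank_eq, rank_prod']

end Submodule

namespace LinearMap

variable {A : Type*} [Ring A] {P Q : Type*} [AddCommGroup P] [Module A P] [AddCommGroup Q]
  [Module A Q]

theorem exists_isCompl_ker (f : P →ₗ[A] Q) [Module.Projective A (range f)] :
    ∃ K : Submodule A P, IsCompl (ker f) K ∧ Nonempty (K ≃ₗ[A] range f) := by
  obtain ⟨s, hs⟩ := f.rangeRestrict.exists_rightInverse_of_surjective f.range_rangeRestrict
  have hsf : ∀ y, f.rangeRestrict (s y) = y := LinearMap.congr_fun hs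
  have hs_inj : Function.Injective s := Function.LeftInverse.injective hsf
  have hidem : IsIdempotentElem (s ∘ₗ f.rangeRestrict) :=
    LinearMap.ext fun x => congrArg s (hsf _)
  have hrange : range (s ∘ₗ f.rangeRestrict) = range s :=
    range_comp_of_range_eq_top _ f.range_rangeRestrict
  have hker : ker (s ∘ₗ f.rangeRestrict) = ker f := by
    rw [ker_comp_of_ker_eq_bot _ (ker_eq_bot.2 hs_inj), ker_rangeRestrict]
  refine ⟨range s, ?_, ⟨(LinearEquiv.ofInjective s hs_inj).symm⟩⟩
  rw [← hrange, ← hker]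
  exact (LinearMap.IsIdempotentElem.isCompl hidem).symm

end LinearMap

section FreeFactor

variable {A : Type*} [Ring A] {P : Type*} [AddCommGroup P] [Module A P]

theorem IsFreeFactor.refl (L : Submodule A P) : IsFreeFactor L L :=
  ⟨le_rfl, ⊥, bot_le, inf_bot_eq L, sup_bot_eq L, inferInstance⟩

theorem IsFreeFactor.map_subtype_of_isCompl {L : Submodule A P} {p q : Submodule A L}
    (h : IsCompl p q) [Module.Free A q] : IsFreeFactor (p.map L.subtype) L := by
  have hinj := L.injective_subtype
  refine ⟨Submodule.map_subtype_le _ _, q.map L.subtype, Submodule.map_subtype_le _ _, ?_, ?_,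
    .of_equiv (q.equivMapOfInjective _ hinj)⟩
  · rw [← Submodule.map_inf _ hinj, h.inf_eq_bot, Submodule.map_bot]
  · rw [← Submodule.map_sup, h.sup_eq_top, Submodule.map_top, Submodule.range_subtype]

theorem IsFreeFactor.trans {L₁ L₂ L₃ : Submodule A P} (h₁₂ : IsFreeFactor L₁ L₂)
    (h₂₃ : IsFreeFactor L₂ L₃) : IsFreeFactor L₁ L₃ := by
  obtain ⟨hle₁₂, D, hD, hinf₁, hsup₁, hDfree⟩ := h₁₂
  obtain ⟨hle₂₃, C, hC, hinf₂, hsup₂, hCfree⟩ := h₂₃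
  have hDC : Disjoint D C := (disjoint_iff.2 hinf₂).mono_left hD
  have hL₂ : (D ⊔ C) ⊓ L₂ = D := by
    rw [sup_inf_assoc_of_le C hD, inf_comm, hinf₂, sup_bot_eq]
  refine ⟨hle₁₂.trans hle₂₃, D ⊔ C, sup_le (hD.trans hle₂₃) hC, ?_, ?_,
    Submodule.free_sup_of_disjoint hDC⟩
  · rw [← inf_eq_left.2 hle₁₂, inf_assoc, inf_comm L₂, hL₂, hinf₁]
  · rw [← sup_assoc, hsup₁, hsup₂]

theorem IsFreeFactor.eq_of_rank_le [StrongRankCondition A] {L₁ L₂ : Submodule A P}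
    [Module.Free A L₁] (h : IsFreeFactor L₁ L₂) (hfin : Module.rank A L₂ < Cardinal.aleph0)
    (hle : Module.rank A L₂ ≤ Module.rank A L₁) : L₁ = L₂ := by
  obtain ⟨-, D, -, hinf, hsup, hDfree⟩ := h
  have hadd : Module.rank A L₂ = Module.rank A L₁ + Module.rank A D :=
    hsup ▸ Submodule.rank_sup_of_disjoint (disjoint_iff.2 hinf)
  have h₁₂ : Module.rank A L₁ ≤ Module.rank A L₂ := hadd ▸ le_self_add
  have hD : Module.rank A D = 0 := by
    refine Cardinal.eq_of_add_eq_add_left (a := Module.rank A L₁) ?_ (h₁₂.trans_lt hfin)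
    rw [add_zero, ← hadd]
    exact le_antisymm hle h₁₂
  have : Subsingleton D := Module.subsingleton_of_rank_zero hD
  rwa [Submodule.eq_bot_of_subsingleton (p := D), sup_bot_eq] at hsup

theorem Module.Basis.isFreeFactor_span_image {ι : Type*} (b : Basis ι A P) (t : Set ι) :
    IsFreeFactor (Submodule.span A (b '' t)) ⊤ := by
  refine ⟨le_top, Submodule.span A (b '' tᶜ), le_top,
    disjoint_iff.1 (b.linearIndependent.disjoint_span_image disjoint_compl_right), ?_, ?_⟩
  · rw [← Submodule.span_union, ← Set.image_union, Set.union_compl_self, Set.image_univ,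
      b.span_eq]
  · rw [Set.image_eq_range]
    exact .of_basis (.span (b.linearIndependent.comp _ Subtype.val_injective))

theorem Submodule.FG.exists_fg_isFreeFactor_top_le [Module.Free A P] {M : Submodule A P}
    (hM : M.FG) : ∃ L : Submodule A P, M ≤ L ∧ L.FG ∧ IsFreeFactor L ⊤ := by
  obtain ⟨s, rfl⟩ := hM
  let b := Module.Free.chooseBasis A P
  let t := ⋃ x ∈ s, ((b.repr x).support : Set (Module.Free.ChooseBasisIndex A P))
  have ht : t.Finite := s.finite_toSet.biUnion fun x _ => (b.repr x).support.finite_toSet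
  refine ⟨Submodule.span A (b '' t), ?_, Submodule.fg_span (ht.image b),
    b.isFreeFactor_span_image t⟩
  refine Submodule.span_le.2 fun x hx => ?_
  exact Submodule.span_mono (Set.image_mono fun i hi => Set.mem_biUnion hx hi)
    (b.mem_span_repr_support x)

end FreeFactor

section SF

variable {A : Type u} [Ring A] {N : Type v} [AddCommGroup N] [Module A N]

theorem IsFreeFactor.inf_left (hSF : HasSF.{u, v} A) {L₂ : Submodule A N}
    (h : IsFreeFactor L₂ ⊤) (L₁ : Submodule A N) : IsFreeFactor (L₁ ⊓ L₂) L₁ := by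
  obtain ⟨-, C, -, hinf, hsup, hCfree⟩ := h
  have hcompl : IsCompl C L₂ := ⟨disjoint_iff.2 (inf_comm L₂ C ▸ hinf),
    codisjoint_iff.2 (sup_comm L₂ C ▸ hsup)⟩
  let f : L₁ →ₗ[A] C := (C.projectionOnto L₂ hcompl).comp L₁.subtype
  have : Module.Free A (LinearMap.range f) := hSF C hCfree _
  obtain ⟨K, hK, ⟨e⟩⟩ := f.exists_isCompl_ker
  have : Module.Free A K := .of_equiv e.symm
  have hker : LinearMap.ker f = L₂.comap L₁.subtype := by
    rw [LinearMap.ker_comp, Submodule.ker_projectionOnto]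
  simpa only [hker, Submodule.map_comap_subtype] using IsFreeFactor.map_subtype_of_isCompl hK

theorem IsAlgExt.le_of_isFreeFactor_top (hSF : HasSF.{u, v} A) {M L L' : Submodule A N}
    (hL : IsAlgExt M L) (hML' : M ≤ L') (hL' : IsFreeFactor L' ⊤) : L ≤ L' :=
  inf_eq_left.1 (hL.2 _ (le_inf hL.1 hML') (hL'.inf_left hSF L))

theorem isAlgExt_of_rank_minimal [StrongRankCondition A] [Module.Free A N] (hSF : HasSF.{u, v} A)
    {M L : Submodule A N} (hML : M ≤ L) (hL : IsFreeFactor L ⊤)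
    (hfin : Module.rank A L < Cardinal.aleph0)
    (hmin : ∀ L' : Submodule A N, M ≤ L' → IsFreeFactor L' ⊤ →
      Module.rank A L ≤ Module.rank A L') :
    IsAlgExt M L := by
  refine ⟨hML, fun L₁ hML₁ h₁ => ?_⟩
  have : Module.Free A L₁ := hSF N inferInstance L₁
  exact h₁.eq_of_rank_le hfin (hmin L₁ hML₁ (h₁.trans hL))

end SF

theorem existsUnique_algebraicClosure {A : Type u} [Ring A] [StrongRankCondition A]
    (hSF : HasSF.{u, v} A)
    (N : Type v) [AddCommGroup N] [Module A N] [Module.Free A N]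
    (M : Submodule A N) (hfg : M.FG ∨ Module.Finite A N) :
    ∃! L : Submodule A N, IsAlgExt M L ∧ IsFreeFactor L ⊤ := by
  obtain ⟨L₀, hML₀, hL₀fg, hL₀⟩ : ∃ L₀ : Submodule A N, M ≤ L₀ ∧ L₀.FG ∧ IsFreeFactor L₀ ⊤ :=
    hfg.elim (·.exists_fg_isFreeFactor_top_le) fun _ => ⟨⊤, le_top, Module.Finite.fg_top, .refl ⊤⟩
  let S : Set (Submodule A N) := {L | M ≤ L ∧ IsFreeFactor L ⊤}
  let rk : Submodule A N → Cardinal := fun L => Module.rank A L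
  let L := Function.argminOn rk S ⟨L₀, hML₀, hL₀⟩
  obtain ⟨hML, hL⟩ : L ∈ S := Function.argminOn_mem _ _ _
  have hmin : ∀ L', M ≤ L' → IsFreeFactor L' ⊤ → Module.rank A L ≤ Module.rank A L' :=
    fun L' hML' hL' => Function.argminOn_le rk S (a := L') ⟨hML', hL'⟩
  have hfin : Module.rank A L < Cardinal.aleph0 := by
    have : Module.Finite A L₀ := Module.Finite.iff_fg.2 hL₀fg
    exact (hmin L₀ hML₀ hL₀).trans_lt (Module.rank_lt_aleph0 A L₀)
  have halg : IsAlgExt M L := isAlgExt_of_rank_minimal hSF hML hL hfin hmin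
  refine ⟨L, ⟨halg, hL⟩, fun L' ⟨halg', hL'⟩ => le_antisymm ?_ ?_⟩
  · exact halg'.le_of_isFreeFactor_top hSF hML hL
  · exact halg.le_of_isFreeFactor_top hSF halg'.1 hL'
end

section
/- Let A be a ring with property (SF) which satisfies the strong rank condition. Let N be a free A-module and M ≤ N a submodule such that at least one of M or N is finitely generated, and let L be the algebraic closure of the extension M ≤ N (so M ≤alg L ≤* N). Then L equals the intersection of all submodules L' of N with M ≤ L' such that L' is a free factor of N. -/
/-!
If `L'` is a free factor of `N` with free complement `C`, then for any submodule `L` the quotient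
`L / (L ⊓ L')` embeds into `C`, so it is free by (SF); hence `L ⊓ L'` is a free factor of `L`.
When `M ≤ L` is algebraic and `M ≤ L'`, this forces `L ⊓ L' = L`, i.e. `L ≤ L'`.
-/

universe u v

namespace LinearMap

variable {R M P : Type*} [Ring R] [AddCommGroup M] [Module R M] [AddCommGroup P] [Module R P]

theorem exists_isCompl_ker_of_projective_range (f : M →ₗ[R] P)
    [Module.Projective R (range f)] : ∃ C : Submodule R M, IsCompl C (ker f) := by
  obtain ⟨s, hs⟩ := f.rangeRestrict.exists_rightInverse_of_surjective f.range_rangeRestrict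
  have hs_inj : Function.Injective s :=
    Function.LeftInverse.injective (g := f.rangeRestrict) (LinearMap.congr_fun hs)
  have hidem : IsIdempotentElem (s ∘ₗ f.rangeRestrict) := by
    rw [IsIdempotentElem, Module.End.mul_eq_comp, comp_assoc, ← comp_assoc f.rangeRestrict, hs,
      id_comp]
  have hker : ker (s ∘ₗ f.rangeRestrict) = ker f := by
    rw [ker_comp, ker_eq_bot.mpr hs_inj, Submodule.comap_bot, ker_rangeRestrict]
  exact ⟨_, hker ▸ IsIdempotentElem.isCompl hidem⟩

end LinearMap

section FreeFactor

variable {R P : Type*} [Ring R] [AddCommGroup P] [Module R P]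

theorem isFreeFactor_map_subtype_of_isCompl {L : Submodule R P} {K C : Submodule R L}
    (h : IsCompl K C) [Module.Free R C] : IsFreeFactor (K.map L.subtype) L := by
  refine ⟨Submodule.map_subtype_le L K, C.map L.subtype, Submodule.map_subtype_le L C, ?_, ?_, ?_⟩
  · rw [← Submodule.map_inf _ L.injective_subtype, h.inf_eq_bot, Submodule.map_bot]
  · rw [← Submodule.map_sup, h.sup_eq_top, Submodule.map_subtype_top]
  · exact .of_equiv (C.equivMapOfInjective _ L.injective_subtype)

theorem isFreeFactor_map_ker_of_free_range {Q : Type*} [AddCommGroup Q] [Module R Q]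
    {L : Submodule R P} (f : L →ₗ[R] Q) [Module.Free R (LinearMap.range f)] :
    IsFreeFactor ((LinearMap.ker f).map L.subtype) L := by
  obtain ⟨C, hC⟩ := f.exists_isCompl_ker_of_projective_range
  have : Module.Free R C := .of_equiv (f.kerComplementEquivRange hC).symm
  exact isFreeFactor_map_subtype_of_isCompl hC.symm

end FreeFactor

section Algebraic

variable {A : Type u} [Ring A] {N : Type v} [AddCommGroup N] [Module A N]

theorem isFreeFactor_inf_of_isFreeFactor_top (hSF : HasSF.{u, v} A) (L : Submodule A N)
    {L' : Submodule A N} (hL' : IsFreeFactor L' ⊤) : IsFreeFactor (L ⊓ L') L := by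
  obtain ⟨-, C, -, hinf, hsup, hC⟩ := hL'
  have hcompl : IsCompl C L' :=
    ⟨disjoint_iff.mpr (inf_comm L' C ▸ hinf), codisjoint_iff.mpr (sup_comm L' C ▸ hsup)⟩
  let f := C.projectionOnto L' hcompl ∘ₗ L.subtype
  have : Module.Free A (LinearMap.range f) := hSF C hC _
  have hker : (LinearMap.ker f).map L.subtype = L ⊓ L' := by
    rw [LinearMap.ker_comp, Submodule.ker_projectionOnto, Submodule.map_comap_subtype]
  exact hker ▸ isFreeFactor_map_ker_of_free_range f

end Algebraic

theorem algebraicClosure_eq_sInf_freeFactors_general {A : Type u} [Ring A]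
    (hSF : HasSF.{u, v} A)
    (N : Type v) [AddCommGroup N] [Module A N]
    (M : Submodule A N)
    (L : Submodule A N) (hLalg : IsAlgExt M L) (hLff : IsFreeFactor L ⊤) :
    L = sInf {L' : Submodule A N | M ≤ L' ∧ IsFreeFactor L' ⊤} :=
  le_antisymm (le_sInf fun _ ⟨hML', hL'⟩ => hLalg.le_of_isFreeFactor_top hSF hML' hL')
    (sInf_le ⟨hLalg.1, hLff⟩)

theorem algebraicClosure_eq_sInf_freeFactors {A : Type u} [Ring A] [StrongRankCondition A]
    (hSF : HasSF.{u, v} A)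
    (N : Type v) [AddCommGroup N] [Module A N] [Module.Free A N]
    (M : Submodule A N) (hfg : M.FG ∨ Module.Finite A N)
    (L : Submodule A N) (hLalg : IsAlgExt M L) (hLff : IsFreeFactor L ⊤) :
    L = sInf {L' : Submodule A N | M ≤ L' ∧ IsFreeFactor L' ⊤} :=
  algebraicClosure_eq_sInf_freeFactors_general hSF N M L hLalg hLff
end

section
/- Let A be a ring with property (SF) which satisfies the strong rank condition. Let N be a free A-module and M ≤ N a submodule such that at least one of M or N is finitely generated, and let L be the algebraic closure of the extension M ≤ N (so M ≤alg L ≤* N). Then L equals the intersection of the kernels of all A-linear maps φ : N → A which vanish identically on M; that is, x ∈ L if and only if φ(x) = 0 for every A-linear φ : N → A with φ|_M ≡ 0. -/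
universe u v

/-!
If `x ∈ L` and `φ` vanishes on `M`, the image of `φ|_L` is a left ideal of `A`, free by (SF), so
`φ|_L` splits: `ker φ|_L` has a complement in `L`, free by (SF) again. Thus `ker φ|_L` is a free
factor of `L` containing `M`, and algebraicity of `M ≤ L` forces `ker φ|_L = L`. Conversely, if
`N = L ⊕ L'` with `L'` free and `x ∉ L`, the projection of `x` to `L'` is nonzero, so some linear
form on `L'` detects it; composed with the projection it vanishes on `L ⊇ M`.
-/

open LinearMap Submodule

theorem LinearMap.isCompl_ker_range_of_comp_eq_id_s7 {R V W : Type*} [Ring R] [AddCommGroup V]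
    [Module R V] [AddCommGroup W] [Module R W] {f : V →ₗ[R] W} {g : W →ₗ[R] V}
    (h : f ∘ₗ g = LinearMap.id) : IsCompl (ker f) (range g) := by
  have hidem : IsIdempotentElem (g ∘ₗ f) := by
    rw [IsIdempotentElem, Module.End.mul_eq_comp, comp_assoc, ← comp_assoc f, h, id_comp]
  have hrange : range (g ∘ₗ f) = range g := by
    rw [range_comp, range_eq_top.2 (surjective_of_comp_eq_id g f h), Submodule.map_top]
  have hker : ker (g ∘ₗ f) = ker f :=
    ker_comp_of_ker_eq_bot f (ker_eq_bot_of_inverse h)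
  simpa only [hrange, hker] using hidem.isCompl.symm

theorem LinearMap.exists_isCompl_ker_s7 {R V W : Type*} [Ring R] [AddCommGroup V] [Module R V]
    [AddCommGroup W] [Module R W] (f : V →ₗ[R] W) [Module.Projective R (range f)] :
    ∃ K : Submodule R V, IsCompl (ker f) K := by
  obtain ⟨g, hg⟩ := f.rangeRestrict.exists_rightInverse_of_surjective f.range_rangeRestrict
  exact ⟨range g, ker_rangeRestrict f ▸ isCompl_ker_range_of_comp_eq_id_s7 hg⟩

theorem IsFreeFactor.exists_dual_ne_zero_of_notMem {A P : Type*} [Ring A] [AddCommGroup P]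
    [Module A P] {L : Submodule A P} (h : IsFreeFactor L ⊤) {x : P} (hx : x ∉ L) :
    ∃ φ : P →ₗ[A] A, (∀ y ∈ L, φ y = 0) ∧ φ x ≠ 0 := by
  obtain ⟨-, L', -, hinf, hsup, _⟩ := h
  have hc : IsCompl L' L := IsCompl.symm ⟨disjoint_iff.2 hinf, codisjoint_iff.2 hsup⟩
  obtain ⟨f, hf⟩ := Module.Projective.exists_dual_ne_zero A
    (mt (projectionOnto_apply_eq_zero_iff hc).1 hx)
  exact ⟨f ∘ₗ L'.projectionOnto L hc,
    fun y hy ↦ by simp [projectionOnto_apply_of_mem_right hc hy], hf⟩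

namespace HasSF

variable {A : Type u} [Ring A] (hSF : HasSF.{u, v} A) {N : Type v} [AddCommGroup N] [Module A N]
  [Module.Free A N]
include hSF

-- `HasSF` only speaks about modules in universe `v`, so the ideal is embedded into `N` along a
-- basis vector.
theorem free_ideal [Nontrivial N] (I : Submodule A A) : Module.Free A I := by
  let b := Module.Free.chooseBasis A N
  obtain ⟨i⟩ := b.index_nonempty
  let f : A →ₗ[A] N := b.repr.symm.toLinearMap ∘ₗ Finsupp.lsingle i
  have hf : Function.Injective f := b.repr.symm.injective.comp (Finsupp.single_injective i)
  have := hSF N ‹_› (I.map f)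
  exact Module.Free.of_equiv (I.equivMapOfInjective f hf).symm

theorem isFreeFactor_map_subtype {L : Submodule A N} {p q : Submodule A L} (h : IsCompl p q) :
    IsFreeFactor (p.map L.subtype) L := by
  refine ⟨map_subtype_le _ _, q.map L.subtype, map_subtype_le _ _, ?_, ?_, hSF N ‹_› _⟩
  · rw [← map_inf _ L.injective_subtype, h.inf_eq_bot, Submodule.map_bot]
  · rw [← Submodule.map_sup, h.sup_eq_top, Submodule.map_top, range_subtype]

theorem isFreeFactor_map_ker [Nontrivial N] (L : Submodule A N) (ψ : L →ₗ[A] A) :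
    IsFreeFactor ((ker ψ).map L.subtype) L := by
  have := hSF.free_ideal (N := N) (range ψ)
  obtain ⟨K, hK⟩ := ψ.exists_isCompl_ker_s7
  exact hSF.isFreeFactor_map_subtype hK

theorem apply_eq_zero_of_isAlgExt {M L : Submodule A N} (hML : IsAlgExt M L) (φ : N →ₗ[A] A)
    (hφ : ∀ y ∈ M, φ y = 0) {x : N} (hx : x ∈ L) : φ x = 0 := by
  cases subsingleton_or_nontrivial N
  · rw [Subsingleton.elim x 0, map_zero]
  have hM : M ≤ (ker (φ ∘ₗ L.subtype)).map L.subtype :=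
    fun y hy ↦ ⟨⟨y, hML.1 hy⟩, hφ y hy, rfl⟩
  obtain ⟨z, hz, rfl⟩ : x ∈ (ker (φ ∘ₗ L.subtype)).map L.subtype := by
    rwa [hML.2 _ hM (hSF.isFreeFactor_map_ker L _)]
  exact hz

end HasSF

theorem algebraicClosure_eq_iInf_ker_general {A : Type u} [Ring A]
    (hSF : HasSF.{u, v} A)
    (N : Type v) [AddCommGroup N] [Module A N] [Module.Free A N]
    (M : Submodule A N)
    (L : Submodule A N) (hLalg : IsAlgExt M L) (hLff : IsFreeFactor L ⊤) :
    ∀ x : N, x ∈ L ↔ ∀ φ : N →ₗ[A] A, (∀ y ∈ M, φ y = 0) → φ x = 0 := by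
  refine fun x ↦ ⟨fun hx φ hφ ↦ hSF.apply_eq_zero_of_isAlgExt hLalg φ hφ hx, fun h ↦ ?_⟩
  by_contra hx
  obtain ⟨φ, hφL, hφx⟩ := hLff.exists_dual_ne_zero_of_notMem hx
  exact hφx (h φ fun y hy ↦ hφL y (hLalg.1 hy))

theorem algebraicClosure_eq_iInf_ker {A : Type u} [Ring A] [StrongRankCondition A]
    (hSF : HasSF.{u, v} A)
    (N : Type v) [AddCommGroup N] [Module A N] [Module.Free A N]
    (M : Submodule A N) (hfg : M.FG ∨ Module.Finite A N)
    (L : Submodule A N) (hLalg : IsAlgExt M L) (hLff : IsFreeFactor L ⊤) :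
    ∀ x : N, x ∈ L ↔ ∀ φ : N →ₗ[A] A, (∀ y ∈ M, φ y = 0) → φ x = 0 :=
  algebraicClosure_eq_iInf_ker_general hSF N M L hLalg hLff
end

section
/- Let A be a ring with property (SF), let Q be a k×m matrix over A, and let M be a right A-submodule of A^k containing the column space R_Q. Suppose F is a k×t matrix and F' is a k×t' matrix over A such that the columns of F form a right basis of a finitely generated submodule M₁ ≤ M which is a free factor of M and contains R_Q, and the columns of F' form a right basis of a finitely generated submodule M₂ ≤ M which is a free factor of M and contains R_Q. Let B (of size t×m) and B' (of size t'×m) be matrices with Q = F·B and Q = F'·B'. Then the left A-submodule of A^m generated by the rows of B equals the left A-submodule generated by the rows of B'. -/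
universe u v

/-- The column space of a matrix `Q`: the right `A`-submodule (i.e. `Aᵐᵒᵖ`-submodule)
of `A^k` generated by the columns of `Q`. -/
def colSpace {A : Type u} [Ring A] {k m : ℕ} (Q : Matrix (Fin k) (Fin m) A) :
    Submodule Aᵐᵒᵖ (Fin k → A) :=
  Submodule.span Aᵐᵒᵖ (Set.range fun j => fun i => Q i j)

/-- The row space of a matrix `Q`: the left `A`-submodule of `A^m` generated by the
rows of `Q`. -/
def rowSpace {A : Type u} [Ring A] {k m : ℕ} (Q : Matrix (Fin k) (Fin m) A) :
    Submodule A (Fin m → A) :=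
  Submodule.span A (Set.range fun i => fun j => Q i j)


/-!
If `colSpace F` is a direct summand of `M` and the columns of `F` are independent, then every
matrix `F'` with columns in `M` can be pushed into `colSpace F` column by column, `F' ↦ F * C`,
along the complement; since the columns of `Q = F' * B'` already lie in `colSpace F`, this gives
`Q = F * (C * B')`, and cancelling `F` yields `B = C * B'`. Hence `rowSpace B ≤ rowSpace B'`,
and the theorem follows by symmetry.
-/

open Matrix MulOpposite

namespace Matrix

variable {A : Type u} [Ring A] {k m t : ℕ}

theorem transpose_mul_apply_eq_sum {s : ℕ} (F : Matrix (Fin k) (Fin t) A)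
    (X : Matrix (Fin t) (Fin s) A) (l : Fin s) :
    (F * X)ᵀ l = ∑ j, op (X j l) • Fᵀ j :=
  mulVec_eq_sum (Xᵀ l) F

theorem mul_left_cancel_of_linearIndependent {s : ℕ} {F : Matrix (Fin k) (Fin t) A}
    (hF : LinearIndependent Aᵐᵒᵖ Fᵀ) {X Y : Matrix (Fin t) (Fin s) A}
    (h : F * X = F * Y) : X = Y := by
  ext j l
  have hcol : ∑ j, op (X j l) • Fᵀ j = ∑ j, op (Y j l) • Fᵀ j := by
    rw [← transpose_mul_apply_eq_sum, ← transpose_mul_apply_eq_sum, h]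
  simpa using Fintype.linearIndependent_iffₛ.mp hF _ _ hcol j

theorem rowSpace_mul_le {s : ℕ} (C : Matrix (Fin t) (Fin s) A) (B : Matrix (Fin s) (Fin m) A) :
    rowSpace (C * B) ≤ rowSpace B := by
  rw [rowSpace, Submodule.span_le]
  rintro _ ⟨i, rfl⟩
  change (C * B) i ∈ rowSpace B
  rw [mul_apply_eq_vecMul, vecMul_eq_sum]
  exact Submodule.sum_mem _ fun s _ => Submodule.smul_mem _ _ (Submodule.subset_span ⟨s, rfl⟩)

end Matrix

/-- Replacing each `v i` by its component `w i` in `N` along the complement `N'` does not change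
any linear combination of the `v i` that already lies in `N`. -/
theorem Submodule.exists_sum_smul_eq_of_mem_sup {R P ι : Type*} [Ring R] [AddCommGroup P]
    [Module R P] [Fintype ι] {N N' : Submodule R P} (hNN' : N ⊓ N' = ⊥) {v : ι → P}
    (hv : ∀ i, v i ∈ N ⊔ N') :
    ∃ w : ι → P, (∀ i, w i ∈ N) ∧
      ∀ c : ι → R, ∑ i, c i • v i ∈ N → ∑ i, c i • w i = ∑ i, c i • v i := by
  choose w hw w' hw' hvw using fun i => Submodule.mem_sup.mp (hv i)
  refine ⟨w, hw, fun c hc => ?_⟩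
  have hsplit : ∑ i, c i • v i = ∑ i, c i • w i + ∑ i, c i • w' i := by
    simp only [← hvw, smul_add, Finset.sum_add_distrib]
  have hN : ∑ i, c i • w' i ∈ N := by
    rw [eq_sub_of_add_eq' hsplit.symm]
    exact N.sub_mem hc (N.sum_mem fun i _ => N.smul_mem _ (hw i))
  have hN' : ∑ i, c i • w' i ∈ N' := N'.sum_mem fun i _ => N'.smul_mem _ (hw' i)
  have hzero : ∑ i, c i • w' i = 0 := by
    simpa [hNN'] using (Submodule.mem_inf.mpr ⟨hN, hN'⟩ : _ ∈ N ⊓ N')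
  rw [hsplit, hzero, add_zero]

theorem exists_eq_mul_of_colSpace_le_sup {A : Type u} [Ring A] {k m t t' : ℕ}
    {Q : Matrix (Fin k) (Fin m) A} {F : Matrix (Fin k) (Fin t) A}
    {F' : Matrix (Fin k) (Fin t') A} {N : Submodule Aᵐᵒᵖ (Fin k → A)}
    (hFind : LinearIndependent Aᵐᵒᵖ Fᵀ) (hQF : colSpace Q ≤ colSpace F)
    (hFN : colSpace F ⊓ N = ⊥) (hF'FN : colSpace F' ≤ colSpace F ⊔ N)
    {B : Matrix (Fin t) (Fin m) A} {B' : Matrix (Fin t') (Fin m) A}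
    (hB : Q = F * B) (hB' : Q = F' * B') :
    ∃ C : Matrix (Fin t) (Fin t') A, B = C * B' := by
  have hF'col : ∀ s, F'ᵀ s ∈ colSpace F ⊔ N := fun s => hF'FN (Submodule.subset_span ⟨s, rfl⟩)
  obtain ⟨w, hwF, hw⟩ := Submodule.exists_sum_smul_eq_of_mem_sup hFN hF'col
  choose c hc using fun s => (Submodule.mem_span_range_iff_exists_fun Aᵐᵒᵖ).mp (hwF s)
  let C : Matrix (Fin t) (Fin t') A := Matrix.of fun j s => unop (c s j)
  have hFC : (F * C)ᵀ = w := by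
    funext s
    rw [transpose_mul_apply_eq_sum, ← hc s]
    rfl
  have hQ : Q = F * C * B' := by
    refine transpose_injective (funext fun l => ?_)
    have hQl : Qᵀ l = ∑ s, op (B' s l) • F'ᵀ s := by
      rw [hB', transpose_mul_apply_eq_sum]
    have hQlF : Qᵀ l ∈ colSpace F := hQF (Submodule.subset_span ⟨l, rfl⟩)
    rw [transpose_mul_apply_eq_sum, hFC, hw _ (hQl ▸ hQlF), hQl]
  exact ⟨C, mul_left_cancel_of_linearIndependent hFind (by rw [← hB, ← Matrix.mul_assoc, hQ])⟩

theorem qDual_well_defined_general {A : Type u} [Ring A]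
    {k m t t' : ℕ} (Q : Matrix (Fin k) (Fin m) A)
    (M : Submodule Aᵐᵒᵖ (Fin k → A))
    (F : Matrix (Fin k) (Fin t) A) (F' : Matrix (Fin k) (Fin t') A)
    (hFind : LinearIndependent Aᵐᵒᵖ (fun j => fun i => F i j))
    (hF'ind : LinearIndependent Aᵐᵒᵖ (fun j => fun i => F' i j))
    (hQF : colSpace Q ≤ colSpace F) (hFff : IsFreeFactor (colSpace F) M)
    (hQF' : colSpace Q ≤ colSpace F') (hF'ff : IsFreeFactor (colSpace F') M)
    (B : Matrix (Fin t) (Fin m) A) (B' : Matrix (Fin t') (Fin m) A)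
    (hB : Q = F * B) (hB' : Q = F' * B') :
    rowSpace B = rowSpace B' := by
  obtain ⟨hFM, N, -, hFN, hFNM, -⟩ := hFff
  obtain ⟨hF'M, N', -, hF'N', hF'N'M, -⟩ := hF'ff
  obtain ⟨C, hC⟩ := exists_eq_mul_of_colSpace_le_sup hFind hQF hFN (hFNM ▸ hF'M) hB hB'
  obtain ⟨C', hC'⟩ := exists_eq_mul_of_colSpace_le_sup hF'ind hQF' hF'N' (hF'N'M ▸ hFM) hB' hB
  apply le_antisymm
  · rw [hC]; exact rowSpace_mul_le C B'
  · rw [hC']; exact rowSpace_mul_le C' B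

theorem qDual_well_defined {A : Type u} [Ring A]
    (hSF : HasSF.{u, u} A) (hSFop : HasSF.{u, u} Aᵐᵒᵖ)
    {k m t t' : ℕ} (Q : Matrix (Fin k) (Fin m) A)
    (M : Submodule Aᵐᵒᵖ (Fin k → A)) (hQM : colSpace Q ≤ M)
    (F : Matrix (Fin k) (Fin t) A) (F' : Matrix (Fin k) (Fin t') A)
    (hFind : LinearIndependent Aᵐᵒᵖ (fun j => fun i => F i j))
    (hF'ind : LinearIndependent Aᵐᵒᵖ (fun j => fun i => F' i j))
    (hQF : colSpace Q ≤ colSpace F) (hFff : IsFreeFactor (colSpace F) M)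
    (hQF' : colSpace Q ≤ colSpace F') (hF'ff : IsFreeFactor (colSpace F') M)
    (B : Matrix (Fin t) (Fin m) A) (B' : Matrix (Fin t') (Fin m) A)
    (hB : Q = F * B) (hB' : Q = F' * B') :
    rowSpace B = rowSpace B' :=
  qDual_well_defined_general Q M F F' hFind hF'ind hQF hFff hQF' hF'ff B B' hB hB'
end

section
/- Let A be a ring with property (SF), let Q be a k×m matrix over A, and let M₁ ≤ M₂ be right A-submodules of A^k both containing the column space R_Q. For i ∈ {1,2}, suppose F_i is a matrix whose columns form a right basis of a finitely generated submodule of M_i which is a free factor of M_i and contains R_Q, and B_i is a matrix with Q = F_i·B_i. Then the left A-submodule of A^m generated by the rows of B₂ is contained in the left A-submodule generated by the rows of B₁ (i.e., taking the Q-dual inverts the order of inclusion). -/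
/-!
Let `M'` be a complement of `colSpace F₂` in `M₂`. The columns of `F₁` lie in `M₁ ≤ M₂`, so
`F₁ = F₂ * C + W` with the columns of `W` in `M'`. Then `F₂ * (B₂ - C * B₁) = Q - F₂ * C * B₁ = W * B₁`
has its columns in `colSpace F₂ ⊓ M' = ⊥`, and linear independence of the columns of `F₂` gives
`B₂ = C * B₁`, whose rows are left combinations of the rows of `B₁`.
-/

universe u v

open MulOpposite

section Columns

variable {A : Type u} [Ring A] {k s m : ℕ}

lemma col_mul (F : Matrix (Fin k) (Fin s) A) (X : Matrix (Fin s) (Fin m) A) (j : Fin m) :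
    (fun i => (F * X) i j) = ∑ t, op (X t j) • fun i => F i t := by
  funext i
  simp [Matrix.mul_apply]

lemma row_mul (C : Matrix (Fin k) (Fin s) A) (X : Matrix (Fin s) (Fin m) A) (i : Fin k) :
    (fun j => (C * X) i j) = ∑ t, C i t • fun j => X t j := by
  funext j
  simp [Matrix.mul_apply]

lemma colSpace_le_iff {X : Matrix (Fin k) (Fin m) A} {N : Submodule Aᵐᵒᵖ (Fin k → A)} :
    colSpace X ≤ N ↔ ∀ j, (fun i => X i j) ∈ N := by
  rw [colSpace, Submodule.span_le, Set.range_subset_iff]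
  rfl

lemma colSpace_mul_le_of_le {X : Matrix (Fin k) (Fin s) A} {N : Submodule Aᵐᵒᵖ (Fin k → A)}
    (h : colSpace X ≤ N) (Y : Matrix (Fin s) (Fin m) A) : colSpace (X * Y) ≤ N := by
  rw [colSpace_le_iff] at h ⊢
  intro j
  rw [col_mul]
  exact Submodule.sum_mem _ fun t _ => Submodule.smul_mem _ _ (h t)

lemma colSpace_mul_le (F : Matrix (Fin k) (Fin s) A) (X : Matrix (Fin s) (Fin m) A) :
    colSpace (F * X) ≤ colSpace F :=
  colSpace_mul_le_of_le le_rfl X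

lemma eq_zero_of_colSpace_le_bot {X : Matrix (Fin k) (Fin m) A} (h : colSpace X ≤ ⊥) : X = 0 := by
  rw [colSpace_le_iff] at h
  ext i j
  exact congrFun ((Submodule.mem_bot _).1 (h j)) i

lemma rowSpace_mul_le (C : Matrix (Fin k) (Fin s) A) (X : Matrix (Fin s) (Fin m) A) :
    rowSpace (C * X) ≤ rowSpace X := by
  rw [rowSpace, Submodule.span_le, Set.range_subset_iff]
  intro i
  rw [row_mul]
  exact Submodule.sum_mem _ fun t _ => Submodule.smul_mem _ _ (Submodule.subset_span ⟨t, rfl⟩)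

lemma eq_zero_of_mul_eq_zero {F : Matrix (Fin k) (Fin s) A}
    (hF : LinearIndependent Aᵐᵒᵖ fun t => fun i => F i t) {X : Matrix (Fin s) (Fin m) A}
    (h : F * X = 0) : X = 0 := by
  ext t j
  have hcol : ∑ t, op (X t j) • (fun i => F i t) = 0 := by
    rw [← col_mul, h]
    rfl
  simpa using Fintype.linearIndependent_iff.1 hF _ hcol t

lemma exists_colSpace_sub_mul_le {G : Matrix (Fin k) (Fin m) A} {F : Matrix (Fin k) (Fin s) A}
    {N : Submodule Aᵐᵒᵖ (Fin k → A)} (h : colSpace G ≤ colSpace F ⊔ N) :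
    ∃ C : Matrix (Fin s) (Fin m) A, colSpace (G - F * C) ≤ N := by
  rw [colSpace_le_iff] at h
  choose x hx w hw hxw using fun j => Submodule.mem_sup.1 (h j)
  choose c hc using fun j => (Submodule.mem_span_range_iff_exists_fun _).1 (hx j)
  refine ⟨fun t j => (c j t).unop, colSpace_le_iff.2 fun j => ?_⟩
  have hcol : (fun i => (G - F * Matrix.of fun t j => (c j t).unop) i j) = w j := by
    change (fun i => G i j) - (fun i => (F * Matrix.of fun t j => (c j t).unop) i j) = w j
    simp only [col_mul, Matrix.of_apply, op_unop, hc, ← hxw, add_sub_cancel_left]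
  exact hcol ▸ hw j

end Columns

theorem qDual_antitone_general {A : Type u} [Ring A]
    {k m t₁ t₂ : ℕ} (Q : Matrix (Fin k) (Fin m) A)
    (M₁ M₂ : Submodule Aᵐᵒᵖ (Fin k → A)) (hM : M₁ ≤ M₂)
    (F₁ : Matrix (Fin k) (Fin t₁) A) (F₂ : Matrix (Fin k) (Fin t₂) A)
    (hF₂ind : LinearIndependent Aᵐᵒᵖ (fun j => fun i => F₂ i j))
    (hF₁ff : IsFreeFactor (colSpace F₁) M₁)
    (hF₂ff : IsFreeFactor (colSpace F₂) M₂)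
    (B₁ : Matrix (Fin t₁) (Fin m) A) (B₂ : Matrix (Fin t₂) (Fin m) A)
    (hB₁ : Q = F₁ * B₁) (hB₂ : Q = F₂ * B₂) :
    rowSpace B₂ ≤ rowSpace B₁ := by
  obtain ⟨-, M', -, hdisj, hsup, -⟩ := hF₂ff
  obtain ⟨C, hC⟩ := exists_colSpace_sub_mul_le (hsup ▸ hF₁ff.1.trans hM)
  have hdiff : F₂ * (B₂ - C * B₁) = (F₁ - F₂ * C) * B₁ := by
    rw [Matrix.mul_sub, Matrix.sub_mul, ← hB₁, ← hB₂, Matrix.mul_assoc]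
  have hB : B₂ = C * B₁ := by
    refine sub_eq_zero.1 (eq_zero_of_mul_eq_zero hF₂ind (eq_zero_of_colSpace_le_bot ?_))
    rw [← hdisj]
    exact le_inf (colSpace_mul_le _ _) (hdiff ▸ colSpace_mul_le_of_le hC B₁)
  exact hB ▸ rowSpace_mul_le C B₁

theorem qDual_antitone {A : Type u} [Ring A]
    (hSF : HasSF.{u, u} A) (hSFop : HasSF.{u, u} Aᵐᵒᵖ)
    {k m t₁ t₂ : ℕ} (Q : Matrix (Fin k) (Fin m) A)
    (M₁ M₂ : Submodule Aᵐᵒᵖ (Fin k → A)) (hM : M₁ ≤ M₂)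
    (hQM₁ : colSpace Q ≤ M₁) (hQM₂ : colSpace Q ≤ M₂)
    (F₁ : Matrix (Fin k) (Fin t₁) A) (F₂ : Matrix (Fin k) (Fin t₂) A)
    (hF₁ind : LinearIndependent Aᵐᵒᵖ (fun j => fun i => F₁ i j))
    (hF₂ind : LinearIndependent Aᵐᵒᵖ (fun j => fun i => F₂ i j))
    (hQF₁ : colSpace Q ≤ colSpace F₁) (hF₁ff : IsFreeFactor (colSpace F₁) M₁)
    (hQF₂ : colSpace Q ≤ colSpace F₂) (hF₂ff : IsFreeFactor (colSpace F₂) M₂)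
    (B₁ : Matrix (Fin t₁) (Fin m) A) (B₂ : Matrix (Fin t₂) (Fin m) A)
    (hB₁ : Q = F₁ * B₁) (hB₂ : Q = F₂ * B₂) :
    rowSpace B₂ ≤ rowSpace B₁ :=
  qDual_antitone_general Q M₁ M₂ hM F₁ F₂ hF₂ind hF₁ff hF₂ff B₁ B₂ hB₁ hB₂
end

section
/- Let A be a ring. Let F be a k×t matrix over A whose columns are right-linearly independent (linearly independent over Aᵐᵒᵖ), let B be a t×m matrix over A, let B' be an s×m matrix whose rows are left-linearly independent and whose rows generate the same left A-submodule of A^m as the rows of B, and let F' be a k×s matrix with F'·B' = F·B. Then the right column space R_{F'} is contained in R_F, and there exists a right A-linear map τ : R_F → R_F whose image lies in R_{F'} and which restricts to the identity on R_{F'}; in particular R_{F'} is a direct summand of R_F. -/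
universe u v

section Aux
variable {A : Type u} [Ring A]

lemma mem_colSpace_iff {k n : ℕ} {Q : Matrix (Fin k) (Fin n) A} {x : Fin k → A} :
    x ∈ colSpace Q ↔ ∃ c : Fin n → A, Q.mulVec c = x := by
  rw [colSpace, Submodule.mem_span_range_iff_exists_fun]
  constructor
  · rintro ⟨c, hc⟩
    refine ⟨fun j => (c j).unop, ?_⟩
    funext i
    rw [← hc]
    simp [Matrix.mulVec, dotProduct, MulOpposite.smul_eq_mul_unop]
  · rintro ⟨c, hc⟩
    refine ⟨fun j => MulOpposite.op (c j), ?_⟩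
    funext i
    rw [← hc]
    simp [Matrix.mulVec, dotProduct, MulOpposite.smul_eq_mul_unop]

lemma mulVec_inj {k n : ℕ} {Q : Matrix (Fin k) (Fin n) A}
    (h : LinearIndependent Aᵐᵒᵖ (fun j => fun i => Q i j))
    {c d : Fin n → A} (hcd : Q.mulVec c = Q.mulVec d) : c = d := by
  have h0 : Q.mulVec (c - d) = 0 := by rw [Matrix.mulVec_sub, hcd, sub_self]
  rw [Fintype.linearIndependent_iff] at h
  have := h (fun j => MulOpposite.op (c j - d j)) ?_
  · funext j
    have := this j
    have : c j - d j = 0 := by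
      have := congrArg MulOpposite.unop this; simpa using this
    exact sub_eq_zero.mp this
  · funext i
    have := congrFun h0 i
    simp only [Matrix.mulVec, dotProduct, Pi.sub_apply] at this
    simpa [MulOpposite.smul_eq_mul_unop] using this

lemma row_mul_eq {p q r : ℕ} (X : Matrix (Fin p) (Fin q) A) (Y : Matrix (Fin q) (Fin r) A)
    (i : Fin p) : (fun l => (X * Y) i l) = ∑ j, X i j • (fun l => Y j l) := by
  funext l
  simp [Matrix.mul_apply]

lemma mul_cancel_rows {p q r : ℕ} {Y : Matrix (Fin q) (Fin r) A}
    (h : LinearIndependent A (fun i => fun j => Y i j))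
    {X X' : Matrix (Fin p) (Fin q) A} (hXX : X * Y = X' * Y) : X = X' := by
  rw [Fintype.linearIndependent_iff] at h
  ext i j
  have hr : ∑ l, (X i l - X' i l) • (fun c => Y l c) = 0 := by
    have h1 := row_mul_eq X Y i
    have h2 := row_mul_eq X' Y i
    rw [hXX] at h1
    simp only [sub_smul, Finset.sum_sub_distrib, ← h1, ← h2]
    simp
  have := h _ hr j
  exact sub_eq_zero.mp this

lemma exists_left_factor {p q r : ℕ} {X : Matrix (Fin p) (Fin r) A}
    {Y : Matrix (Fin q) (Fin r) A} (h : rowSpace X ≤ rowSpace Y) :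
    ∃ D : Matrix (Fin p) (Fin q) A, X = D * Y := by
  have hrow : ∀ i : Fin p, ∃ c : Fin q → A, ∑ j, c j • (fun l => Y j l) = fun l => X i l := by
    intro i
    rw [← Submodule.mem_span_range_iff_exists_fun]
    exact h (Submodule.subset_span ⟨i, rfl⟩)
  choose D hD using hrow
  refine ⟨Matrix.of D, ?_⟩
  ext i l
  have := congrFun (hD i) l
  simp only [Finset.sum_apply, Pi.smul_apply, smul_eq_mul] at this
  simp [Matrix.mul_apply, ← this]

end Aux

section Aux2
variable {A : Type u} [Ring A]

lemma mulVec_smul_right {p q : ℕ} (Q : Matrix (Fin p) (Fin q) A) (c : Fin q → A) (a : A) :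
    Q.mulVec (fun j => c j * a) = fun i => Q.mulVec c i * a := by
  funext i
  simp [Matrix.mulVec, dotProduct, Finset.sum_mul, mul_assoc]

end Aux2

theorem doubleDual_directSummand {A : Type u} [Ring A] {k t s m : ℕ}
    (F : Matrix (Fin k) (Fin t) A)
    (hFind : LinearIndependent Aᵐᵒᵖ (fun j => fun i => F i j))
    (B : Matrix (Fin t) (Fin m) A) (B' : Matrix (Fin s) (Fin m) A)
    (hB'ind : LinearIndependent A (fun i => fun j => B' i j))
    (hB'span : rowSpace B' = rowSpace B)
    (F' : Matrix (Fin k) (Fin s) A) (hF' : F' * B' = F * B) :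
    colSpace F' ≤ colSpace F ∧
    ∃ τ : ↥(colSpace F) →ₗ[Aᵐᵒᵖ] ↥(colSpace F),
      (∀ x : ↥(colSpace F), (τ x : Fin k → A) ∈ colSpace F') ∧
      (∀ x : ↥(colSpace F), (x : Fin k → A) ∈ colSpace F' → τ x = x) ∧
      ∃ C : Submodule Aᵐᵒᵖ (Fin k → A),
        C ≤ colSpace F ∧ colSpace F' ⊓ C = ⊥ ∧ colSpace F' ⊔ C = colSpace F := by
  obtain ⟨D, hD⟩ := exists_left_factor (X := B) (Y := B') hB'span.ge
  obtain ⟨E, hE⟩ := exists_left_factor (X := B') (Y := B) hB'span.le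
  have hF'D : F' = F * D := by
    apply mul_cancel_rows hB'ind
    rw [hF', hD, Matrix.mul_assoc]
  have hED : E * D = 1 := by
    apply mul_cancel_rows hB'ind
    rw [Matrix.mul_assoc, ← hD, ← hE, Matrix.one_mul]
  have hsub : colSpace F' ≤ colSpace F := by
    intro x hx
    obtain ⟨d, hd⟩ := mem_colSpace_iff.mp hx
    refine mem_colSpace_iff.mpr ⟨D.mulVec d, ?_⟩
    rw [Matrix.mulVec_mulVec, ← hF'D, hd]
  have hrepex : ∀ x : ↥(colSpace F), ∃ c, F.mulVec c = (x : Fin k → A) :=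
    fun x => mem_colSpace_iff.mp x.2
  choose rep hrep using hrepex
  have hGmem : ∀ c : Fin t → A, (F' * E).mulVec c ∈ colSpace F' :=
    fun c => mem_colSpace_iff.mpr ⟨E.mulVec c, by rw [Matrix.mulVec_mulVec]⟩
  let τ : ↥(colSpace F) →ₗ[Aᵐᵒᵖ] ↥(colSpace F) :=
    { toFun := fun x => ⟨(F' * E).mulVec (rep x), hsub (hGmem (rep x))⟩
      map_add' := by
        intro x y
        have hxy : rep (x + y) = rep x + rep y := by
          apply mulVec_inj hFind
          rw [hrep, Matrix.mulVec_add, hrep, hrep]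
          rfl
        apply Subtype.ext
        show (F' * E).mulVec (rep (x + y)) = (F' * E).mulVec (rep x) + (F' * E).mulVec (rep y)
        rw [hxy, Matrix.mulVec_add]
      map_smul' := by
        intro a x
        have hx : rep (a • x) = fun j => rep x j * a.unop := by
          apply mulVec_inj hFind
          rw [hrep, mulVec_smul_right]
          funext i
          show ((a • x : ↥(colSpace F)) : Fin k → A) i = F.mulVec (rep x) i * a.unop
          rw [Submodule.coe_smul, ← hrep x]
          rfl
        apply Subtype.ext
        show (F' * E).mulVec (rep (a • x)) = ((a • ⟨(F' * E).mulVec (rep x), hsub (hGmem (rep x))⟩ :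
          ↥(colSpace F)) : Fin k → A)
        rw [hx, mulVec_smul_right]
        rfl }
  have h1 : ∀ x : ↥(colSpace F), (τ x : Fin k → A) ∈ colSpace F' := fun x => hGmem (rep x)
  have h2 : ∀ x : ↥(colSpace F), (x : Fin k → A) ∈ colSpace F' → τ x = x := by
    intro x hx
    obtain ⟨d, hd⟩ := mem_colSpace_iff.mp hx
    have hrx : rep x = D.mulVec d := by
      apply mulVec_inj hFind
      rw [hrep, Matrix.mulVec_mulVec, ← hF'D, hd]
    apply Subtype.ext
    show (F' * E).mulVec (rep x) = (x : Fin k → A)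
    rw [hrx, Matrix.mulVec_mulVec, Matrix.mul_assoc, hED, Matrix.mul_one, hd]
  refine ⟨hsub, τ, h1, h2, ?_⟩
  set P := Submodule.comap (colSpace F).subtype (colSpace F') with hP
  have hPmap : Submodule.map (colSpace F).subtype P = colSpace F' := by
    rw [hP, Submodule.map_comap_subtype]
    exact inf_eq_right.mpr hsub
  have hinf : P ⊓ LinearMap.ker τ = ⊥ := by
    rw [eq_bot_iff]
    rintro x hx
    rw [Submodule.mem_inf] at hx
    obtain ⟨hxP, hxk⟩ := hx
    rw [LinearMap.mem_ker] at hxk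
    rw [Submodule.mem_bot, ← h2 x hxP, hxk]
  have hsup : P ⊔ LinearMap.ker τ = ⊤ := by
    rw [eq_top_iff]
    intro x _
    have hτx : τ x ∈ P := Submodule.mem_comap.mpr (h1 x)
    have hker : x - τ x ∈ LinearMap.ker τ := by
      rw [LinearMap.mem_ker, map_sub, h2 (τ x) (h1 x), sub_self]
    have hxeq : x = τ x + (x - τ x) := by abel
    exact hxeq ▸ Submodule.add_mem_sup hτx hker
  refine ⟨Submodule.map (colSpace F).subtype (LinearMap.ker τ),
    Submodule.map_subtype_le _ _, ?_, ?_⟩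
  · rw [← hPmap, ← Submodule.map_inf _ (Submodule.injective_subtype _), hinf, Submodule.map_bot]
  · rw [← hPmap, ← Submodule.map_sup, hsup, Submodule.map_subtype_top]
end

section
/- Let A be a ring with property (SF) which satisfies the strong rank condition. Let Q be a k×m matrix over A, let F be a k×t matrix whose columns are right-linearly independent and whose column space R_F contains the column space R_Q, and let B be the t×m matrix with Q = F·B. Then the extension of left A-submodules of A^m given by (row space of Q) ≤ (left submodule generated by the rows of B) is algebraic. -/
universe u v

theorem qDual_isAlgExt {A : Type u} [Ring A]
    [StrongRankCondition A] [StrongRankCondition Aᵐᵒᵖ]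
    (hSF : HasSF.{u, u} A) (hSFop : HasSF.{u, u} Aᵐᵒᵖ)
    {k m t : ℕ} (Q : Matrix (Fin k) (Fin m) A)
    (F : Matrix (Fin k) (Fin t) A)
    (hFind : LinearIndependent Aᵐᵒᵖ (fun j => fun i => F i j))
    (hQF : colSpace Q ≤ colSpace F)
    (B : Matrix (Fin t) (Fin m) A) (hB : Q = F * B) :
    IsAlgExt (rowSpace Q) (rowSpace B) := by
  classical
  have hrowQ : ∀ i, (fun s => Q i s) = ∑ j, F i j • (fun s => B j s) := by
    intro i
    funext s
    simp [hB, Matrix.mul_apply, Finset.sum_apply]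
  have hQB : rowSpace Q ≤ rowSpace B := by
    rw [rowSpace, Submodule.span_le]
    rintro _ ⟨i, rfl⟩
    show (fun s => Q i s) ∈ rowSpace B
    rw [hrowQ i]
    exact Submodule.sum_mem _ fun j _ =>
      Submodule.smul_mem _ _ (Submodule.subset_span ⟨j, rfl⟩)
  refine ⟨hQB, ?_⟩
  rintro L hQL ⟨hLN, L', hL'N, hinf, hsup, -⟩
  refine le_antisymm hLN ?_
  have hmem : ∀ j, (fun s => B j s) ∈ L ⊔ L' := by
    intro j
    rw [hsup]
    exact Submodule.subset_span ⟨j, rfl⟩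
  choose l hl l' hl' hdecomp using fun j => Submodule.mem_sup.mp (hmem j)
  have key : ∀ i, (∑ j, F i j • l' j) = 0 := by
    intro i
    have hQiL : (fun s => Q i s) ∈ L := hQL (Submodule.subset_span ⟨i, rfl⟩)
    have h1 : (∑ j, F i j • l' j) ∈ L' :=
      Submodule.sum_mem _ fun j _ => Submodule.smul_mem _ _ (hl' j)
    have hsum : (fun s => Q i s) = (∑ j, F i j • l j) + ∑ j, F i j • l' j := by
      rw [hrowQ i, ← Finset.sum_add_distrib]
      exact Finset.sum_congr rfl fun j _ => by rw [← smul_add, hdecomp j]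
    have h2 : (∑ j, F i j • l' j) ∈ L := by
      have heq : (∑ j, F i j • l' j) = (fun s => Q i s) - ∑ j, F i j • l j :=
        eq_sub_of_add_eq' hsum.symm
      rw [heq]
      exact Submodule.sub_mem _ hQiL
        (Submodule.sum_mem _ fun j _ => Submodule.smul_mem _ _ (hl j))
    have : (∑ j, F i j • l' j) ∈ L ⊓ L' := ⟨h2, h1⟩
    rw [hinf] at this
    exact this
  have hl'zero : ∀ j, l' j = 0 := by
    intro j
    funext s
    have hzero : ∑ j, MulOpposite.op (l' j s) • (fun i => F i j) = (0 : Fin k → A) := by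
      funext i
      have hk := congrFun (key i) s
      simp only [Finset.sum_apply, Pi.smul_apply, smul_eq_mul, Pi.zero_apply] at hk ⊢
      simp only [op_smul_eq_mul]
      exact hk
    have := Fintype.linearIndependent_iff.mp hFind
      (fun j => MulOpposite.op (l' j s)) hzero j
    simpa using congrArg MulOpposite.unop this
  rw [rowSpace, Submodule.span_le]
  rintro _ ⟨j, rfl⟩
  show (fun s => B j s) ∈ L
  have heq : (fun s => B j s) = l j := by
    rw [← hdecomp j, hl'zero j, add_zero]
  rw [heq]
  exact hl j
end

section
/- Let K be a field, F a free group, and A = K[F] the free group algebra. Let w ∈ F, let λ ∈ K be nonzero, and let f_1, …, f_t, g_1, …, g_t ∈ A satisfy Σ_{i=1}^t f_i·g_i = w − λ⁻¹ (where w denotes the image of the group element w in A). Then the left ideal of A generated by {g_1, …, g_t} equals the left ideal of A generated by {g_1·w⁻¹, …, g_t·w⁻¹} (where w⁻¹ denotes the image in A of the inverse of w in F). -/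
/-- In the free group algebra `K[F]`, if `∑ i, f i * g i = w - λ⁻¹` for a word `w ∈ F`
and a nonzero scalar `λ ∈ K`, then the left ideal generated by the `g i` equals the
left ideal generated by the `g i * w⁻¹`. -/
theorem leftIdeal_g_eq_leftIdeal_g_winv {K : Type*} [Field K] {α : Type*}
    (w : FreeGroup α) (lam : K) (hlam : lam ≠ 0) {t : ℕ}
    (f g : Fin t → MonoidAlgebra K (FreeGroup α))
    (h : ∑ i, f i * g i =
      MonoidAlgebra.of K (FreeGroup α) w -
        algebraMap K (MonoidAlgebra K (FreeGroup α)) lam⁻¹) :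
    Submodule.span (MonoidAlgebra K (FreeGroup α)) (Set.range g) =
      Submodule.span (MonoidAlgebra K (FreeGroup α))
        (Set.range fun i => g i * MonoidAlgebra.of K (FreeGroup α) w⁻¹) := by
  set W : MonoidAlgebra K (FreeGroup α) := MonoidAlgebra.of K (FreeGroup α) w with hW
  set V : MonoidAlgebra K (FreeGroup α) := MonoidAlgebra.of K (FreeGroup α) w⁻¹ with hV
  have hWV : W * V = 1 := by
    rw [hW, hV, ← map_mul, mul_inv_cancel, map_one]
  have hVW : V * W = 1 := by
    rw [hW, hV, ← map_mul, inv_mul_cancel, map_one]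
  have hC : ∀ (c : K) (x : MonoidAlgebra K (FreeGroup α)),
      algebraMap K (MonoidAlgebra K (FreeGroup α)) c * x
        = x * algebraMap K (MonoidAlgebra K (FreeGroup α)) c :=
    fun c x => (Algebra.commutes _ _)
  apply le_antisymm
  · rw [Submodule.span_le]
    rintro _ ⟨j, rfl⟩
    have key : g j = (algebraMap K (MonoidAlgebra K (FreeGroup α)) lam⁻¹) * (g j * V)
        + ∑ i, (g j * f i) * (g i * V) := by
      have e1 : ∑ i, (g j * f i) * (g i * V) = g j * ((∑ i, f i * g i) * V) := by
        rw [Finset.sum_mul, Finset.mul_sum]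
        simp [mul_assoc]
      have e2 : g j * (algebraMap K (MonoidAlgebra K (FreeGroup α)) lam⁻¹ * V)
          = algebraMap K (MonoidAlgebra K (FreeGroup α)) lam⁻¹ * (g j * V) := by
        rw [← mul_assoc, ← hC, mul_assoc]
      rw [e1, h, sub_mul, hWV, mul_sub, mul_one, e2, ← mul_assoc]
      abel
    rw [key]
    refine add_mem ?_ (Submodule.sum_mem _ fun i _ => ?_)
    · exact Submodule.smul_mem _ _ (Submodule.subset_span ⟨j, rfl⟩)
    · exact Submodule.smul_mem _ (g j * f i) (Submodule.subset_span ⟨i, rfl⟩)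
  · rw [Submodule.span_le]
    rintro _ ⟨j, rfl⟩
    show g j * V ∈ _
    have key : g j * V = (algebraMap K (MonoidAlgebra K (FreeGroup α)) lam) * (g j)
        - ∑ i, ((algebraMap K (MonoidAlgebra K (FreeGroup α)) lam) * (g j * V * f i)) * g i := by
      have e1 : ∑ i, ((algebraMap K (MonoidAlgebra K (FreeGroup α)) lam) * (g j * V * f i)) * g i
          = (algebraMap K (MonoidAlgebra K (FreeGroup α)) lam) * (g j * V * (∑ i, f i * g i)) := by
        simp [Finset.mul_sum, mul_assoc]
      rw [e1, h, mul_sub (g j * V), mul_assoc (g j), hVW, mul_one,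
        ← hC lam⁻¹ (g j * V), mul_sub, ← mul_assoc, ← map_mul, mul_inv_cancel₀ hlam,
        map_one, one_mul]
      abel
    rw [key]
    refine sub_mem ?_ (Submodule.sum_mem _ fun i _ => ?_)
    · exact Submodule.smul_mem _ _ (Submodule.subset_span ⟨j, rfl⟩)
    · exact Submodule.smul_mem _ _ (Submodule.subset_span ⟨i, rfl⟩)
end
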